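/- The Shapley value of the stand-alone game satisfies monotonicity: if B is a bargaining set, i a player, and x ∈ ℝⁿ is such that there exists y ∈ B with y_i ≤ x_i and y_j = x_j for all j ≠ i, then ψ_i(ch(B ∪ {x})) ≥ ψ_i(B), where ch denotes the closed convex comprehensive hull. -/
import Mathlib


open Finset

/-- The stand-alone claim of coalition `S` in bargaining set `B`. -/
noncomputable def claim {n : ℕ} (B : Set (Fin n → ℝ)) (S : Finset (Fin n)) : ℝ :=
  sSup ((fun x => ∑ i ∈ S, x i) '' B)

/-- The Shapley value of the stand-alone game. -/
noncomputable def psi {n : ℕ} (B : Set (Fin n → ℝ)) (i : Fin n) : ℝ :=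
  (1 / n) * ∑ S ∈ (Finset.univ.erase i).powerset,
    (((n - 1).choose S.card : ℝ))⁻¹ * (claim B (insert i S) - claim B S)

/-- A bargaining set: nonempty, closed, convex, comprehensive, bounded above. -/
def IsBargainingSet {n : ℕ} (B : Set (Fin n → ℝ)) : Prop :=
  B.Nonempty ∧ IsClosed B ∧ Convex ℝ B ∧
    (∀ x ∈ B, ∀ y : Fin n → ℝ, y ≤ x → y ∈ B) ∧ BddAbove B

/-- The closed convex comprehensive hull. -/
def compHull {n : ℕ} (X : Set (Fin n → ℝ)) : Set (Fin n → ℝ) :=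
  ⋂₀ {A : Set (Fin n → ℝ) | X ⊆ A ∧ IsClosed A ∧ Convex ℝ A ∧
    ∀ x ∈ A, ∀ y : Fin n → ℝ, y ≤ x → y ∈ A}

theorem psi_monotonicity {n : ℕ} (B : Set (Fin n → ℝ)) (hB : IsBargainingSet B)
    (i : Fin n) (x : Fin n → ℝ)
    (hx : ∃ y ∈ B, y i ≤ x i ∧ ∀ j, j ≠ i → y j = x j) :
    psi B i ≤ psi (compHull (B ∪ {x})) i := by
  obtain ⟨y, hyB, hyi, hyj⟩ := hx
  obtain ⟨hne, hcl, hcv, hcomp, ⟨b, hb⟩⟩ := hB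
  set H := compHull (B ∪ {x}) with hH
  set b' : Fin n → ℝ := fun j => max (b j) (x j) with hb'
  -- B is contained in the hull
  have hBsub : B ⊆ H := fun z hz =>
    Set.mem_sInter.2 fun A hA => hA.1 (Or.inl hz)
  have hHne : H.Nonempty := ⟨y, hBsub hyB⟩
  -- the hull is bounded above by b'
  have hIic : H ⊆ Set.Iic b' := by
    apply Set.sInter_subset_of_mem
    refine ⟨?_, isClosed_Iic, convex_Iic (𝕜 := ℝ) b', fun w hw w' hw' => le_trans hw' hw⟩
    rintro z (hz | hz)
    · exact fun j => le_trans (hb hz j) (le_max_left _ _)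
    · rw [Set.mem_singleton_iff] at hz
      subst hz
      exact fun j => le_max_right _ _
  -- bounded above facts for images
  have hBimg : ∀ T : Finset (Fin n), BddAbove ((fun z => ∑ j ∈ T, z j) '' B) := by
    intro T
    refine ⟨∑ j ∈ T, b j, ?_⟩
    rintro a ⟨z, hz, rfl⟩
    exact Finset.sum_le_sum fun j _ => hb hz j
  have hHimg : ∀ T : Finset (Fin n), BddAbove ((fun z => ∑ j ∈ T, z j) '' H) := by
    intro T
    refine ⟨∑ j ∈ T, b' j, ?_⟩
    rintro a ⟨z, hz, rfl⟩
    exact Finset.sum_le_sum fun j _ => hIic hz j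
  -- monotonicity of claims under inclusion
  have hmono : ∀ T : Finset (Fin n), claim B T ≤ claim H T := by
    intro T
    exact csSup_le_csSup (hHimg T) (hne.image _) (Set.image_mono hBsub)
  -- for coalitions not containing i, the hull claim does not exceed the B claim
  have hle : ∀ S : Finset (Fin n), i ∉ S → claim H S ≤ claim B S := by
    intro S hiS
    apply csSup_le (hHne.image _)
    rintro a ⟨z, hz, rfl⟩
    -- the half-space is closed, convex, comprehensive and contains B ∪ {x}
    have hzA : z ∈ {w : Fin n → ℝ | ∑ j ∈ S, w j ≤ claim B S} := by
      refine Set.sInter_subset_of_mem ?_ hz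
      refine ⟨?_, ?_, ?_, ?_⟩
      · rintro w (hw | hw)
        · exact le_csSup (hBimg S) ⟨w, hw, rfl⟩
        · rw [Set.mem_singleton_iff] at hw
          subst hw
          have : ∑ j ∈ S, w j = ∑ j ∈ S, y j := by
            apply Finset.sum_congr rfl
            intro j hj
            exact (hyj j (fun h => hiS (h ▸ hj))).symm
          rw [Set.mem_setOf_eq, this]
          exact le_csSup (hBimg S) ⟨y, hyB, rfl⟩
      · exact isClosed_le (continuous_finset_sum _ fun j _ => continuous_apply j)
          continuous_const
      · intro w1 h1 w2 h2 a c ha hc hac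
        simp only [Set.mem_setOf_eq] at *
        have : ∑ j ∈ S, (a • w1 + c • w2) j = a * ∑ j ∈ S, w1 j + c * ∑ j ∈ S, w2 j := by
          simp [Finset.sum_add_distrib, Finset.mul_sum]
        rw [this]
        calc a * ∑ j ∈ S, w1 j + c * ∑ j ∈ S, w2 j
            ≤ a * claim B S + c * claim B S := by
              gcongr
          _ = claim B S := by rw [← add_mul, hac, one_mul]
      · intro w hw w' hw'
        exact le_trans (Finset.sum_le_sum fun j _ => hw' j) hw
    exact hzA
  -- conclude
  unfold psi
  apply mul_le_mul_of_nonneg_left _ (by positivity)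
  apply Finset.sum_le_sum
  intro S hS
  have hiS : i ∉ S := fun h =>
    (Finset.mem_erase.1 (Finset.mem_powerset.1 hS h)).1 rfl
  apply mul_le_mul_of_nonneg_left _ (by positivity)
  exact sub_le_sub (hmono (insert i S)) (hle S hiS)
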